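/- arXiv:1904.08407 — 3 statements merged into one kernel-verified Lean document; each statement's English description precedes it below -/
import Mathlib

section
/- Self-improvement of time-backwards ADR: if Σ is ADR with constant M₀ and time-backwards ADR on Δ_r = Σ ∩ Q_r(x₀,t₀) with constant c₀ (i.e., c₀ ρ^{n+1} ≤ σ(Q⁻_ρ(x,t) ∩ Σ) for all Q_ρ ⊆ Q_r centered at points of Σ), then there exist constants a ∈ (0,1) and c₁ > 0, depending only on n, M₀, c₀, such that c₁ r^{n+1} ≤ σ(Δ⁻_r ∩ {(y,s) : s < t₀ - (a r)²}), where Δ⁻_r = Q⁻_r(x₀,t₀) ∩ Σ. -/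
open MeasureTheory Set
open scoped ENNReal

/-- The open parabolic cube of parabolic sidelength `r` centered at `x`. -/
def pQ {n : ℕ} (x : EuclideanSpace ℝ (Fin n) × ℝ) (r : ℝ) :
    Set (EuclideanSpace ℝ (Fin n) × ℝ) :=
  {q | (∀ i, |x.1 i - q.1 i| < r) ∧ |x.2 - q.2| < r ^ 2}

/-- The time-backward half `Q⁻_r(x,t)` of the parabolic cube `Q_r(x,t)`. -/
def pQminus {n : ℕ} (x : EuclideanSpace ℝ (Fin n) × ℝ) (r : ℝ) :
    Set (EuclideanSpace ℝ (Fin n) × ℝ) :=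
  {q | (∀ i, |x.1 i - q.1 i| < r) ∧ x.2 - r ^ 2 < q.2 ∧ q.2 < x.2}

/-!
Apply time-backwards ADR at `x₀` on the half-size cube: `σ(Δ⁻_{r/2}) ≳ c₀ r^{n+1}`. The part of
`Δ⁻_{r/2}` in the thin slab `t₀ - (ar)² ≤ t < t₀` is covered by the `(2m)^n` cells of a spatial
grid of mesh `ar`, where `a = 1/(2m)`. Each nonempty cell sits inside a cube `Q_{ar}(y)` centred
on `Σ`, so by the upper ADR bound the slab has measure at most `(2m)^n M₀ (ar)^{n+1} = a M₀ r^{n+1}`.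
For `m` large this is at most half of the lower bound, and the rest lies below `t₀ - (ar)²`.
-/

open Finset in
theorem measure_le_card_mul_of_fiber_le {α ι : Type*} [MeasurableSpace α] (μ : Measure α)
    (f : α → ι) (I : Finset ι) (T : Set α) (hT : ∀ x ∈ T, f x ∈ I) (B : ℝ≥0∞)
    (hB : ∀ k ∈ I, μ (T ∩ f ⁻¹' {k}) ≤ B) : μ T ≤ #I * B := by
  have hcover : T ⊆ ⋃ k ∈ I, T ∩ f ⁻¹' {k} := fun x hx =>
    mem_iUnion₂.2 ⟨f x, hT x hx, hx, rfl⟩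
  calc μ T ≤ ∑ k ∈ I, μ (T ∩ f ⁻¹' {k}) :=
        (measure_mono hcover).trans (measure_biUnion_finset_le _ _)
    _ ≤ ∑ _k ∈ I, B := sum_le_sum hB
    _ = #I * B := by rw [sum_const, nsmul_eq_mul]

section ParabolicCubes

variable {n : ℕ}

theorem pQminus_subset_pQ (x : EuclideanSpace ℝ (Fin n) × ℝ) (r : ℝ) :
    pQminus x r ⊆ pQ x r := by
  rintro q ⟨hsp, hlo, hhi⟩
  exact ⟨hsp, abs_lt.2 ⟨by linarith, by linarith⟩⟩

theorem pQ_mono (x : EuclideanSpace ℝ (Fin n) × ℝ) {r₁ r₂ : ℝ} (h0 : 0 ≤ r₁) (h : r₁ ≤ r₂) :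
    pQ x r₁ ⊆ pQ x r₂ := by
  rintro q ⟨hsp, ht⟩
  exact ⟨fun i => (hsp i).trans_le h, ht.trans_le (by nlinarith)⟩

theorem pQminus_mono (x : EuclideanSpace ℝ (Fin n) × ℝ) {r₁ r₂ : ℝ} (h0 : 0 ≤ r₁)
    (h : r₁ ≤ r₂) : pQminus x r₁ ⊆ pQminus x r₂ := by
  rintro q ⟨hsp, hlo, hhi⟩
  exact ⟨fun i => (hsp i).trans_le h, by nlinarith, hhi⟩

theorem pQ_subset_pQ_of_mem {x y : EuclideanSpace ℝ (Fin n) × ℝ} {s ρ r : ℝ}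
    (hy : y ∈ pQ x s) (hs : 0 ≤ s) (hρ : 0 ≤ ρ) (hr : s + ρ ≤ r) : pQ y ρ ⊆ pQ x r := by
  rintro z ⟨hzsp, hzt⟩
  refine ⟨fun i => ?_, ?_⟩
  · calc |x.1 i - z.1 i| ≤ |x.1 i - y.1 i| + |y.1 i - z.1 i| := abs_sub_le _ _ _
      _ < s + ρ := add_lt_add (hy.1 i) (hzsp i)
      _ ≤ r := hr
  · calc |x.2 - z.2| ≤ |x.2 - y.2| + |y.2 - z.2| := abs_sub_le _ _ _
      _ < s ^ 2 + ρ ^ 2 := add_lt_add hy.2 hzt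
      _ ≤ r ^ 2 := by nlinarith

theorem measure_pQminus_inter_le_add (μ : Measure (EuclideanSpace ℝ (Fin n) × ℝ))
    (S : Set (EuclideanSpace ℝ (Fin n) × ℝ)) (x : EuclideanSpace ℝ (Fin n) × ℝ) {s r : ℝ}
    (hs : 0 ≤ s) (hsr : s ≤ r) (τ : ℝ) :
    μ (pQminus x s ∩ S) ≤
      μ (pQminus x r ∩ S ∩ {q | q.2 < τ}) + μ (pQminus x s ∩ S ∩ {q | τ ≤ q.2}) := by
  refine (measure_mono ?_).trans (measure_union_le _ _)
  rintro q ⟨hq, hqS⟩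
  rcases lt_or_ge q.2 τ with hlt | hge
  · exact Or.inl ⟨⟨pQminus_mono x hs hsr hq, hqS⟩, hlt⟩
  · exact Or.inr ⟨⟨hq, hqS⟩, hge⟩

noncomputable def gridIndex (x₀ : EuclideanSpace ℝ (Fin n) × ℝ) (h : ℝ)
    (q : EuclideanSpace ℝ (Fin n) × ℝ) : Fin n → ℤ :=
  fun i => ⌊(q.1 i - x₀.1 i) / h⌋

theorem gridIndex_mem_piFinset {x₀ q : EuclideanSpace ℝ (Fin n) × ℝ} {h s : ℝ} {m : ℕ}
    (hh : 0 < h) (hs : s ≤ m * h) (hq : q ∈ pQminus x₀ s) :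
    gridIndex x₀ h q ∈ Fintype.piFinset fun _ => Finset.Ico (-(m : ℤ)) m := by
  refine Fintype.mem_piFinset.2 fun i => Finset.mem_Ico.2 ⟨Int.le_floor.2 ?_, Int.floor_lt.2 ?_⟩
  all_goals
    obtain ⟨hlo, hhi⟩ := abs_lt.1 ((hq.1 i).trans_le hs)
    push_cast
  · rw [le_div_iff₀ hh]; linarith
  · rw [div_lt_iff₀ hh]; linarith

theorem abs_sub_lt_of_gridIndex_eq {x₀ y q : EuclideanSpace ℝ (Fin n) × ℝ} {h : ℝ}
    (hh : 0 < h) (hyq : gridIndex x₀ h y = gridIndex x₀ h q) (i : Fin n) :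
    |y.1 i - q.1 i| < h := by
  have := Int.abs_sub_lt_one_of_floor_eq_floor (congr_fun hyq i)
  rwa [← sub_div, sub_sub_sub_cancel_right, abs_div, abs_of_pos hh, div_lt_one hh] at this

theorem measure_slab_le {S : Set (EuclideanSpace ℝ (Fin n) × ℝ)}
    {σ : Measure (EuclideanSpace ℝ (Fin n) × ℝ)} {x₀ : EuclideanSpace ℝ (Fin n) × ℝ}
    {M₀ r s h : ℝ} {m : ℕ} (hh : 0 < h) (hs : 0 ≤ s) (hsm : s ≤ m * h) (hsr : s + h ≤ r)
    (hADR : ∀ y ∈ S, ∀ ρ : ℝ, 0 < ρ → pQ y ρ ⊆ pQ x₀ r →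
      σ (pQ y ρ ∩ S) ≤ ENNReal.ofReal (M₀ * ρ ^ (n + 1))) :
    σ (pQminus x₀ s ∩ S ∩ {q | x₀.2 - h ^ 2 ≤ q.2}) ≤
      ENNReal.ofReal ((2 * m) ^ n * (M₀ * h ^ (n + 1))) := by
  set T := pQminus x₀ s ∩ S ∩ {q | x₀.2 - h ^ 2 ≤ q.2}
  have hcard : (Fintype.piFinset fun _ : Fin n => Finset.Ico (-(m : ℤ)) m).card = (2 * m) ^ n := by
    simp only [Fintype.card_piFinset, Int.card_Ico, Finset.prod_const, Finset.card_univ,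
      Fintype.card_fin]
    congr 1
    omega
  have hcell : ∀ k, σ (T ∩ gridIndex x₀ h ⁻¹' {k}) ≤ ENNReal.ofReal (M₀ * h ^ (n + 1)) := by
    intro k
    rcases (T ∩ gridIndex x₀ h ⁻¹' {k}).eq_empty_or_nonempty with hempty | ⟨y, ⟨hyT, hyk⟩⟩
    · simp [hempty]
    have hsub : T ∩ gridIndex x₀ h ⁻¹' {k} ⊆ pQ y h ∩ S := by
      rintro q ⟨hqT, hqk⟩
      have hy₁ : y.2 < x₀.2 := hyT.1.1.2.2
      have hy₂ : x₀.2 - h ^ 2 ≤ y.2 := hyT.2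
      have hq₁ : q.2 < x₀.2 := hqT.1.1.2.2
      have hq₂ : x₀.2 - h ^ 2 ≤ q.2 := hqT.2
      exact ⟨⟨abs_sub_lt_of_gridIndex_eq hh (hyk.trans hqk.symm),
        abs_lt.2 ⟨by linarith, by linarith⟩⟩, hqT.1.2⟩
    exact (measure_mono hsub).trans <| hADR y hyT.1.2 h hh <|
      pQ_subset_pQ_of_mem (pQminus_subset_pQ x₀ s hyT.1.1) hs hh.le hsr
  have := measure_le_card_mul_of_fiber_le σ (gridIndex x₀ h) _ T
    (fun q hq => gridIndex_mem_piFinset hh hsm hq.1.1) _ fun k _ => hcell k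
  rw [hcard] at this
  rw [ENNReal.ofReal_mul (by positivity)]
  convert this using 2
  exact_mod_cast ENNReal.ofReal_natCast _

end ParabolicCubes

theorem slab_bound_le {n m : ℕ} {M₀ c₀ r : ℝ} (hm : 0 < m) (hc₀ : 0 < c₀) (hr : 0 ≤ r)
    (hmM : 2 ^ (n + 1) * M₀ / c₀ ≤ m) :
    (2 * m) ^ n * (M₀ * ((2 * m : ℝ)⁻¹ * r) ^ (n + 1)) ≤ c₀ / 2 ^ (n + 2) * r ^ (n + 1) := by
  have hm' : (0 : ℝ) < m := Nat.cast_pos.2 hm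
  have hlhs : (2 * m) ^ n * (M₀ * ((2 * m : ℝ)⁻¹ * r) ^ (n + 1)) = M₀ / (2 * m) * r ^ (n + 1) := by
    rw [mul_pow _ r, inv_pow, pow_succ (2 * (m : ℝ)) n]
    field_simp
  rw [hlhs]
  refine mul_le_mul_of_nonneg_right ?_ (by positivity)
  rw [div_le_iff₀ hc₀] at hmM
  rw [div_le_div_iff₀ (by positivity) (by positivity), pow_succ]
  nlinarith

theorem TBADR_self_improvement_general (n : ℕ) (M₀ c₀ : ℝ) (hc₀ : 0 < c₀) :
    ∃ a : ℝ, 0 < a ∧ a < 1 ∧ ∃ c₁ > (0 : ℝ),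
      ∀ (S : Set (EuclideanSpace ℝ (Fin n) × ℝ))
        (σ : Measure (EuclideanSpace ℝ (Fin n) × ℝ))
        (x₀ : EuclideanSpace ℝ (Fin n) × ℝ) (r : ℝ), 0 < r → x₀ ∈ S →
        (∀ y ∈ S, ∀ ρ : ℝ, 0 < ρ → pQ y ρ ⊆ pQ x₀ r →
          ENNReal.ofReal (ρ ^ (n + 1) / M₀) ≤ σ (pQ y ρ ∩ S) ∧
            σ (pQ y ρ ∩ S) ≤ ENNReal.ofReal (M₀ * ρ ^ (n + 1))) →
        (∀ y ∈ S, ∀ ρ : ℝ, 0 < ρ → pQ y ρ ⊆ pQ x₀ r →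
          ENNReal.ofReal (c₀ * ρ ^ (n + 1)) ≤ σ (pQminus y ρ ∩ S)) →
        ENNReal.ofReal (c₁ * r ^ (n + 1)) ≤
          σ ((pQminus x₀ r ∩ S) ∩ {q | q.2 < x₀.2 - (a * r) ^ 2}) := by
  set m := ⌈2 ^ (n + 1) * M₀ / c₀⌉₊ + 1
  have hm : 0 < m := Nat.succ_pos _
  have hm' : (1 : ℝ) ≤ m := Nat.one_le_cast.2 hm
  have hmM : 2 ^ (n + 1) * M₀ / c₀ ≤ m := (Nat.le_ceil _).trans (by simp [m])
  set c₁ := c₀ / 2 ^ (n + 2)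
  refine ⟨(2 * m)⁻¹, by positivity, inv_lt_one_of_one_lt₀ (by linarith), c₁, by positivity, ?_⟩
  intro S σ x₀ r hr hx₀ hADR hTB
  set h := (2 * m : ℝ)⁻¹ * r
  have hlower := hTB x₀ hx₀ (r / 2) (by positivity) (pQ_mono x₀ (by positivity) (by linarith))
  have hsplit := measure_pQminus_inter_le_add σ S x₀ (by positivity) (by linarith : r / 2 ≤ r)
    (x₀.2 - h ^ 2)
  have hmh : (m : ℝ) * h = r / 2 := by simp only [h]; field_simp
  have hhr : h ≤ r / 2 := by nlinarith
  have hslab := (measure_slab_le (s := r / 2) (h := h) (m := m) (by positivity) (by positivity)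
    hmh.ge (by linarith) fun y hy ρ hρ hsub => (hADR y hy ρ hρ hsub).2).trans
    (ENNReal.ofReal_le_ofReal (slab_bound_le hm hc₀ hr.le hmM))
  have hhalf : c₀ * (r / 2) ^ (n + 1) = c₁ * r ^ (n + 1) + c₁ * r ^ (n + 1) := by
    simp only [c₁, div_pow, pow_succ]; ring
  refine (ENNReal.add_le_add_iff_right (ENNReal.ofReal_ne_top (r := c₁ * r ^ (n + 1)))).1 ?_
  rw [← ENNReal.ofReal_add (by positivity) (by positivity), ← hhalf]
  exact hlower.trans (hsplit.trans (add_le_add le_rfl hslab))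

/-- self-improvement of time-backwards ADR.  If `Σ` is ADR with
constant `M₀` and time-backwards ADR with constant `c₀` on `Δ_r = Σ ∩ Q_r(x₀,t₀)`,
then there are `a ∈ (0,1)` and `c₁ > 0`, depending only on `n, M₀, c₀`, such that
`c₁ r^{n+1} ≤ σ(Δ⁻_r ∩ {s < t₀ - (ar)²})`. -/
theorem TBADR_self_improvement (n : ℕ) (M₀ c₀ : ℝ) (hM₀ : 0 < M₀) (hc₀ : 0 < c₀) :
    ∃ a : ℝ, 0 < a ∧ a < 1 ∧ ∃ c₁ > (0 : ℝ),
      ∀ (S : Set (EuclideanSpace ℝ (Fin n) × ℝ))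
        (σ : Measure (EuclideanSpace ℝ (Fin n) × ℝ))
        (x₀ : EuclideanSpace ℝ (Fin n) × ℝ) (r : ℝ), 0 < r → x₀ ∈ S →
        (∀ y ∈ S, ∀ ρ : ℝ, 0 < ρ → pQ y ρ ⊆ pQ x₀ r →
          ENNReal.ofReal (ρ ^ (n + 1) / M₀) ≤ σ (pQ y ρ ∩ S) ∧
            σ (pQ y ρ ∩ S) ≤ ENNReal.ofReal (M₀ * ρ ^ (n + 1))) →
        (∀ y ∈ S, ∀ ρ : ℝ, 0 < ρ → pQ y ρ ⊆ pQ x₀ r →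
          ENNReal.ofReal (c₀ * ρ ^ (n + 1)) ≤ σ (pQminus y ρ ∩ S)) →
        ENNReal.ofReal (c₁ * r ^ (n + 1)) ≤
          σ ((pQminus x₀ r ∩ S) ∩ {q | q.2 < x₀.2 - (a * r) ^ 2}) :=
  TBADR_self_improvement_general n M₀ c₀ hc₀
end

section
/- Parabolic polar coordinates: the map (ρ, ζ, τ) ↦ (ρζ, ρ²τ) from (0,∞) × S^n (where (ζ,τ) ∈ S^n ⊂ R^n × R) to R^{n+1} \ {0} is a bijection, and for integrable f on R^{n+1}, ∬ f(X,t) dX dt = ∫_{S^n} ∫_0^∞ f(ρζ, ρ²τ) ρ^{n+1} dρ dμ(ζ,τ), where dμ(ζ,τ) = (1+τ²) dσ_{S^n}(ζ,τ). -/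
/-!
Parabolic polar coordinates factor through ordinary ones. With `e` the last basis vector,
`(ρ, v) ↦ (ρζ, ρ²τ)` is `(ρ, v) ↦ ρ • v` followed by the stretch `x ↦ x + ⟪e, x⟫ (‖x‖ - 1) e`,
which fixes the part of `x` orthogonal to `e` and multiplies its `e`-component by `‖x‖`. The
stretch is a differentiable bijection of `ℝ^{n+1} \ {0}` (recovering `x` from its image amounts to
solving a quadratic equation for `‖x‖²`), and its derivative is a rank-one perturbation of the
identity with determinant `‖x‖ + ⟪e, x⟫² / ‖x‖ = ρ (1 + τ²)`. Changing variables through the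
stretch and then decomposing Lebesgue measure as `ρⁿ dρ dσ` produces the weight `ρⁿ⁺¹ (1 + τ²)`.
-/

open MeasureTheory Set Metric

/-- The parabolic polar coordinate map `(ρ,(ζ,τ)) ↦ (ρζ, ρ²τ)`, where a point of the
unit sphere `S^n ⊂ ℝ^{n+1}` is written as `(ζ,τ)` with `ζ ∈ ℝ^n` the first `n`
coordinates and `τ ∈ ℝ` the last coordinate. -/
noncomputable def parPolar (n : ℕ)
    (p : ℝ × sphere (0 : EuclideanSpace ℝ (Fin (n + 1))) 1) :
    EuclideanSpace ℝ (Fin n) × ℝ :=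
  ((WithLp.toLp 2 (fun i : Fin n => p.1 * (p.2 : EuclideanSpace ℝ (Fin (n + 1))) (Fin.castSucc i)) :
      EuclideanSpace ℝ (Fin n)),
    p.1 ^ 2 * (p.2 : EuclideanSpace ℝ (Fin (n + 1))) (Fin.last n))

open scoped RealInnerProductSpace

theorem exists_pos_sq_eq_mul_add_sq {a c : ℝ} (ha : 0 ≤ a) (hac : a ≠ 0 ∨ c ≠ 0) :
    ∃ u > 0, u ^ 2 = a * u + c ^ 2 := by
  have hd : √(a ^ 2 + 4 * c ^ 2) ^ 2 = a ^ 2 + 4 * c ^ 2 := Real.sq_sqrt (by positivity)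
  refine ⟨(a + √(a ^ 2 + 4 * c ^ 2)) / 2, ?_, by nlinarith⟩
  have : 0 < a ^ 2 + 4 * c ^ 2 := by rcases hac with h | h <;> positivity
  have := Real.sqrt_pos.2 this
  linarith

theorem eq_of_sq_eq_mul_add_sq {a c u v : ℝ} (hu : 0 < u) (hv : 0 < v)
    (hu' : u ^ 2 = a * u + c ^ 2) (hv' : v ^ 2 = a * v + c ^ 2) : u = v := by
  have h : (u - v) * (u + v - a) = 0 := by linear_combination hu' - hv'
  rcases mul_eq_zero.1 h with h | h
  · linarith
  · nlinarith [mul_pos hu hv, sq_nonneg c]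

theorem LinearMap.det_id_add_smulRight {K M : Type*} [Field K] [AddCommGroup M] [Module K M]
    [FiniteDimensional K M] (f : M →ₗ[K] K) (v : M) :
    LinearMap.det (LinearMap.id + f.smulRight v) = 1 + f v := by
  let b := Module.finBasis K M
  have hmat : LinearMap.toMatrix b b (LinearMap.id + f.smulRight v) =
      1 + Matrix.replicateCol Unit (b.repr v) * Matrix.replicateRow Unit (fun j => f (b j)) := by
    ext i j
    simp [LinearMap.toMatrix_apply, Matrix.one_apply, Finsupp.single_apply, Matrix.mul_apply,
      mul_comm, eq_comm]
  rw [← LinearMap.det_toMatrix b, hmat, Matrix.det_one_add_replicateCol_mul_replicateRow]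
  simp only [dotProduct, add_right_inj]
  conv_rhs => rw [← b.sum_repr v, map_sum]
  simp only [map_smul, smul_eq_mul, mul_comm]

theorem hasFDerivAt_norm {E : Type*} [NormedAddCommGroup E] [InnerProductSpace ℝ E] {x : E}
    (hx : x ≠ 0) : HasFDerivAt (‖·‖) (‖x‖⁻¹ • innerSL ℝ x) x := by
  have h := (hasStrictFDerivAt_norm_sq x).hasFDerivAt.sqrt (by positivity)
  simp only [Real.sqrt_sq (norm_nonneg _)] at h
  convert h using 1
  ext v
  simp
  field_simp

theorem bijOn_smul_sphere {E : Type*} [NormedAddCommGroup E] [NormedSpace ℝ E] :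
    BijOn (fun p : ℝ × sphere (0 : E) 1 => p.1 • (p.2 : E)) (Ioi 0 ×ˢ univ) {0}ᶜ := by
  refine ⟨?_, ?_, ?_⟩
  · rintro ⟨ρ, v⟩ ⟨hρ : 0 < ρ, -⟩
    exact smul_ne_zero hρ.ne' (ne_zero_of_mem_unit_sphere v)
  · rintro ⟨ρ, v⟩ ⟨hρ : 0 < ρ, -⟩ ⟨ρ', v'⟩ ⟨hρ' : 0 < ρ', -⟩ (h : ρ • (v : E) = ρ' • (v' : E))
    have hρρ' : ρ = ρ' := by
      simpa [norm_smul, abs_of_pos hρ, abs_of_pos hρ'] using congrArg norm h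
    subst hρρ'
    exact Prod.ext rfl (Subtype.ext (smul_right_injective E hρ.ne' h))
  · intro x (hx : x ≠ 0)
    refine ⟨(‖x‖, ⟨‖x‖⁻¹ • x, by simp [norm_smul, hx]⟩), ⟨norm_pos_iff.2 hx, trivial⟩, ?_⟩
    exact smul_inv_smul₀ (norm_ne_zero_iff.2 hx) x

section Polar

variable {E F : Type*} [NormedAddCommGroup E] [NormedSpace ℝ E] [FiniteDimensional ℝ E]
  [MeasurableSpace E] [BorelSpace E] [Nontrivial E] (μ : Measure E) [μ.IsAddHaarMeasure]
  [NormedAddCommGroup F] [NormedSpace ℝ F]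

theorem MeasureTheory.Measure.integral_volumeIoiPow (n : ℕ) (g : ℝ → F) :
    ∫ r, g r ∂Measure.volumeIoiPow n = ∫ r in Ioi (0 : ℝ), r ^ n • g r := by
  simp only [Measure.volumeIoiPow, ENNReal.ofReal]
  rw [integral_withDensity_eq_integral_smul (measurable_subtype_coe.pow_const _).real_toNNReal,
    integral_subtype_comap measurableSet_Ioi fun r => Real.toNNReal (r ^ n) • g r]
  refine setIntegral_congr_fun measurableSet_Ioi fun r (hr : 0 < r) => ?_
  rw [NNReal.smul_def, Real.coe_toNNReal _ (pow_nonneg hr.le _)]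

theorem integral_eq_integral_sphere_integral_Ioi {f : E → F} (hf : Integrable f μ) :
    ∫ x, f x ∂μ = ∫ v : sphere (0 : E) 1,
      (∫ r in Ioi (0 : ℝ), r ^ (Module.finrank ℝ E - 1) • f (r • (v : E))) ∂μ.toSphere := by
  let polar := (homeomorphUnitSphereProd E).toMeasurableEquiv
  have hpolar := (μ.measurePreserving_homeomorphUnitSphereProd).symm polar
  have hint : Integrable (fun p : sphere (0 : E) 1 × Ioi (0 : ℝ) => f (p.2.1 • p.1.1))
      (μ.toSphere.prod (Measure.volumeIoiPow (Module.finrank ℝ E - 1))) := by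
    have h := hf.integrableOn (s := {0}ᶜ)
    rw [integrableOn_iff_comap_subtypeVal (measurableSet_singleton 0).compl] at h
    exact (hpolar.integrable_comp_emb polar.symm.measurableEmbedding).2 h
  calc ∫ x, f x ∂μ = ∫ x : ({0}ᶜ : Set E), f x ∂μ.comap (↑) := by
        rw [integral_subtype_comap (measurableSet_singleton _).compl, restrict_compl_singleton]
    _ = ∫ p, f (p.2.1 • p.1.1) ∂μ.toSphere.prod (Measure.volumeIoiPow _) :=
        (hpolar.integral_comp' (fun x : ({0}ᶜ : Set E) => f x)).symm
    _ = _ := by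
        rw [integral_prod _ hint]
        congr! 2 with v
        exact Measure.integral_volumeIoiPow _ fun r => f (r • (v : E))

end Polar

section ParabolicStretch

variable {E : Type*} [NormedAddCommGroup E] [InnerProductSpace ℝ E] {e : E}

def parabolicStretch (e x : E) : E := x + (⟪e, x⟫ * (‖x‖ - 1)) • e

theorem inner_parabolicStretch (he : ‖e‖ = 1) (x : E) :
    ⟪e, parabolicStretch e x⟫ = ‖x‖ * ⟪e, x⟫ := by
  simp [parabolicStretch, inner_add_right, real_inner_smul_right, he]
  ring

theorem parabolicStretch_sub_inner_smul (he : ‖e‖ = 1) (x : E) :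
    parabolicStretch e x - ⟪e, parabolicStretch e x⟫ • e = x - ⟪e, x⟫ • e := by
  rw [inner_parabolicStretch he, parabolicStretch]
  module

theorem inner_sub_inner_smul (he : ‖e‖ = 1) (x : E) : ⟪e, x - ⟪e, x⟫ • e⟫ = 0 := by
  simp [inner_sub_right, real_inner_smul_right, he]

theorem norm_sub_inner_smul_sq (he : ‖e‖ = 1) (x : E) :
    ‖x - ⟪e, x⟫ • e‖ ^ 2 = ‖x‖ ^ 2 - ⟪e, x⟫ ^ 2 := by
  rw [norm_sub_sq_real, norm_smul, real_inner_smul_right, real_inner_comm, he]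
  simp
  ring

theorem parabolicStretch_ne_zero (he : ‖e‖ = 1) {x : E} (hx : x ≠ 0) :
    parabolicStretch e x ≠ 0 := by
  intro h
  have hinner : ‖x‖ * ⟪e, x⟫ = 0 := by rw [← inner_parabolicStretch he, h, inner_zero_right]
  have hsub := parabolicStretch_sub_inner_smul he x
  rw [h, (mul_eq_zero.1 hinner).resolve_left (norm_ne_zero_iff.2 hx)] at hsub
  simp only [inner_zero_right, zero_smul, sub_zero] at hsub
  exact hx hsub.symm

theorem injOn_parabolicStretch (he : ‖e‖ = 1) : InjOn (parabolicStretch e) {0}ᶜ := by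
  intro x (hx : x ≠ 0) y (hy : y ≠ 0) hxy
  -- `u = ‖z‖ ^ 2` is the positive root of `u ^ 2 = ‖w‖ ^ 2 * u + c ^ 2`, where
  -- `c • e + w` is the orthogonal decomposition of the image of `z`.
  have root : ∀ z : E, (‖z‖ ^ 2) ^ 2 =
      ‖parabolicStretch e z - ⟪e, parabolicStretch e z⟫ • e‖ ^ 2 * ‖z‖ ^ 2 +
        ⟪e, parabolicStretch e z⟫ ^ 2 := fun z => by
    rw [parabolicStretch_sub_inner_smul he, norm_sub_inner_smul_sq he, inner_parabolicStretch he]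
    ring
  have hnorm : ‖x‖ = ‖y‖ := by
    have h := eq_of_sq_eq_mul_add_sq (by positivity) (by positivity) (root x) (hxy ▸ root y)
    exact (sq_eq_sq₀ (norm_nonneg _) (norm_nonneg _)).1 h
  have hinner : ⟪e, x⟫ = ⟪e, y⟫ := by
    have h := congrArg (⟪e, ·⟫) hxy
    simp only [inner_parabolicStretch he, hnorm] at h
    exact mul_left_cancel₀ (norm_ne_zero_iff.2 hy) h
  have hsub := parabolicStretch_sub_inner_smul he x
  rw [hxy, parabolicStretch_sub_inner_smul he, hinner] at hsub
  exact sub_left_injective hsub.symm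

theorem surjOn_parabolicStretch (he : ‖e‖ = 1) : SurjOn (parabolicStretch e) {0}ᶜ {0}ᶜ := by
  intro y (hy : y ≠ 0)
  set c := ⟪e, y⟫
  set w := y - c • e
  have hwc : ‖w‖ ^ 2 ≠ 0 ∨ c ≠ 0 := by
    by_contra! h
    exact hy (by simpa [w, h.2] using h.1)
  obtain ⟨u, hu, hroot⟩ := exists_pos_sq_eq_mul_add_sq (sq_nonneg ‖w‖) hwc
  set r := √u
  have hr : 0 < r := Real.sqrt_pos.2 hu
  have hr2 : r ^ 2 = u := Real.sq_sqrt hu.le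
  set x := w + (c / r) • e
  have hinner : ⟪e, x⟫ = c / r := by
    simp [x, w, c, inner_add_right, real_inner_smul_right, he, inner_sub_inner_smul he y]
  have hnorm : ‖x‖ = r := by
    have h : ‖x‖ ^ 2 = r ^ 2 := by
      rw [norm_add_sq_real, real_inner_smul_right, real_inner_comm, inner_sub_inner_smul he,
        norm_smul, he, Real.norm_eq_abs, mul_one, sq_abs, div_pow, hr2, mul_zero, mul_zero,
        add_zero]
      field_simp
      linarith
    exact (sq_eq_sq₀ (norm_nonneg _) hr.le).1 h
  refine ⟨x, fun h => hr.ne' (by rw [← hnorm, h, norm_zero]), ?_⟩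
  have hcoef : c / r * (r - 1) = c - c / r := by field_simp
  rw [parabolicStretch, hinner, hnorm, hcoef]
  module

theorem bijOn_parabolicStretch (he : ‖e‖ = 1) : BijOn (parabolicStretch e) {0}ᶜ {0}ᶜ :=
  ⟨fun _ hx => parabolicStretch_ne_zero he hx, injOn_parabolicStretch he,
    surjOn_parabolicStretch he⟩

theorem hasFDerivAt_parabolicStretch {x : E} (hx : x ≠ 0) :
    HasFDerivAt (parabolicStretch e)
      (ContinuousLinearMap.id ℝ E +
        ((‖x‖ - 1) • innerSL ℝ e + (⟪e, x⟫ * ‖x‖⁻¹) • innerSL ℝ x).smulRight e) x := by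
  have h : HasFDerivAt (parabolicStretch e) _ x := (hasFDerivAt_id x).add
    ((((innerSL ℝ e).hasFDerivAt).mul ((hasFDerivAt_norm hx).sub_const 1)).smul_const e)
  refine h.congr_fderiv ?_
  ext v
  simp
  module

theorem hasFDerivWithinAt_fderiv_parabolicStretch :
    ∀ x ∈ ({0}ᶜ : Set E),
      HasFDerivWithinAt (parabolicStretch e) (fderiv ℝ (parabolicStretch e) x) {0}ᶜ x :=
  fun _ hx => (hasFDerivAt_parabolicStretch hx).differentiableAt.hasFDerivAt.hasFDerivWithinAt

variable [FiniteDimensional ℝ E]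

theorem det_fderiv_parabolicStretch (he : ‖e‖ = 1) {x : E} (hx : x ≠ 0) :
    (fderiv ℝ (parabolicStretch e) x).det = ‖x‖ + ⟪e, x⟫ ^ 2 / ‖x‖ := by
  rw [(hasFDerivAt_parabolicStretch hx).fderiv, ContinuousLinearMap.det,
    ContinuousLinearMap.toLinearMap_add, ContinuousLinearMap.coe_id,
    ContinuousLinearMap.coe_smulRight, LinearMap.det_id_add_smulRight]
  simp [he, real_inner_comm]
  field_simp
  ring

theorem abs_det_fderiv_parabolicStretch_smul (he : ‖e‖ = 1) {ρ : ℝ}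
    (hρ : 0 < ρ) {v : E} (hv : ‖v‖ = 1) :
    |(fderiv ℝ (parabolicStretch e) (ρ • v)).det| = ρ * (1 + ⟪e, v⟫ ^ 2) := by
  have hρv : ‖ρ • v‖ = ρ := by rw [norm_smul, hv, Real.norm_eq_abs, abs_of_pos hρ, mul_one]
  rw [det_fderiv_parabolicStretch he (by rw [← norm_ne_zero_iff, hρv]; exact hρ.ne'), hρv,
    real_inner_smul_right, abs_of_pos (by positivity)]
  field_simp

variable [MeasurableSpace E] [BorelSpace E] (μ : Measure E)
  [μ.IsAddHaarMeasure] {F : Type*} [NormedAddCommGroup F] [NormedSpace ℝ F]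

theorem integral_abs_det_fderiv_parabolicStretch_smul (he : ‖e‖ = 1) (g : E → F) :
    ∫ x, |(fderiv ℝ (parabolicStretch e) x).det| • g (parabolicStretch e x) ∂μ = ∫ x, g x ∂μ := by
  have : Nontrivial E := nontrivial_of_ne e 0 (by rintro rfl; simp at he)
  calc _ = ∫ x in {0}ᶜ, |(fderiv ℝ (parabolicStretch e) x).det| • g (parabolicStretch e x) ∂μ := by
        rw [restrict_compl_singleton]
    _ = ∫ x in parabolicStretch e '' {0}ᶜ, g x ∂μ :=
        (integral_image_eq_integral_abs_det_fderiv_smul μ (measurableSet_singleton 0).compl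
          hasFDerivWithinAt_fderiv_parabolicStretch (bijOn_parabolicStretch he).injOn g).symm
    _ = ∫ x, g x ∂μ := by rw [(bijOn_parabolicStretch he).image_eq, restrict_compl_singleton]

theorem integrable_abs_det_fderiv_parabolicStretch_smul_iff (he : ‖e‖ = 1) {g : E → F} :
    Integrable (fun x => |(fderiv ℝ (parabolicStretch e) x).det| • g (parabolicStretch e x)) μ ↔
      Integrable g μ := by
  have : Nontrivial E := nontrivial_of_ne e 0 (by rintro rfl; simp at he)
  have h := integrableOn_image_iff_integrableOn_abs_det_fderiv_smul μ
    (measurableSet_singleton 0).compl hasFDerivWithinAt_fderiv_parabolicStretch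
    (bijOn_parabolicStretch he).injOn g
  rwa [(bijOn_parabolicStretch he).image_eq, IntegrableOn, IntegrableOn, restrict_compl_singleton,
    Iff.comm] at h

end ParabolicStretch

noncomputable def EuclideanSpace.splitLast (n : ℕ) :
    EuclideanSpace ℝ (Fin (n + 1)) ≃ᵐ EuclideanSpace ℝ (Fin n) × ℝ :=
  (MeasurableEquiv.toLp 2 _).symm.trans <|
    (MeasurableEquiv.piFinSuccAbove (fun _ => ℝ) (Fin.last n)).trans <|
      MeasurableEquiv.prodComm.trans <|
        (MeasurableEquiv.toLp 2 _).prodCongr (MeasurableEquiv.refl ℝ)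

namespace EuclideanSpace

theorem splitLast_apply (n : ℕ) (x : EuclideanSpace ℝ (Fin (n + 1))) :
    splitLast n x = (WithLp.toLp 2 fun i => x i.castSucc, x (Fin.last n)) := by
  simp [splitLast, MeasurableEquiv.piFinSuccAbove]
  rfl

theorem measurePreserving_splitLast (n : ℕ) : MeasurePreserving (splitLast n) :=
  ((volume_preserving_symm_measurableEquiv_toLp (Fin n)).symm.prod (.id volume)).comp <|
    Measure.measurePreserving_swap.comp <|
      (volume_preserving_piFinSuccAbove (fun _ => ℝ) (Fin.last n)).comp <|
        volume_preserving_symm_measurableEquiv_toLp (Fin (n + 1))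

theorem bijOn_splitLast (n : ℕ) : BijOn (splitLast n) {0}ᶜ {q | q ≠ 0} :=
  (bijOn_singleton.2 (by simp [splitLast_apply]; rfl)).compl (splitLast n).bijective

theorem splitLast_parabolicStretch_smul {n : ℕ} {ρ : ℝ} (hρ : 0 ≤ ρ)
    (v : sphere (0 : EuclideanSpace ℝ (Fin (n + 1))) 1) :
    splitLast n
        (parabolicStretch (single (Fin.last n) 1) (ρ • (v : EuclideanSpace ℝ (Fin (n + 1))))) =
      parPolar n (ρ, v) := by
  have hρv : ‖ρ • (v : EuclideanSpace ℝ (Fin (n + 1)))‖ = ρ := by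
    rw [norm_smul, norm_eq_of_mem_sphere v, Real.norm_eq_abs, abs_of_nonneg hρ, mul_one]
  simp only [splitLast_apply, parabolicStretch, parPolar, hρv, inner_single_left]
  refine Prod.ext (PiLp.ext fun i => ?_) ?_
  · simp [(Fin.castSucc_lt_last i).ne]
  · simp
    ring

end EuclideanSpace

/-- parabolic polar coordinates.  The map `(ρ,ζ,τ) ↦ (ρζ, ρ²τ)` is a
bijection from `(0,∞) × S^n` onto `ℝ^{n+1} \ {0}`, and for integrable `f`,
`∬ f(X,t) dX dt = ∫_{S^n} ∫_0^∞ f(ρζ,ρ²τ) ρ^{n+1} dρ (1+τ²) dσ_{S^n}(ζ,τ)`. -/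
theorem parabolic_polar_coordinates (n : ℕ) :
    Set.BijOn (parPolar n) (Set.Ioi (0 : ℝ) ×ˢ Set.univ)
      {q : EuclideanSpace ℝ (Fin n) × ℝ | q ≠ 0} ∧
    ∀ f : EuclideanSpace ℝ (Fin n) × ℝ → ℝ, Integrable f →
      (∫ q, f q) =
        ∫ v : sphere (0 : EuclideanSpace ℝ (Fin (n + 1))) 1,
          (1 + ((v : EuclideanSpace ℝ (Fin (n + 1))) (Fin.last n)) ^ 2) *
            (∫ ρ in Set.Ioi (0 : ℝ), f (parPolar n (ρ, v)) * ρ ^ (n + 1))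
          ∂(volume : Measure (EuclideanSpace ℝ (Fin (n + 1)))).toSphere := by
  set e : EuclideanSpace ℝ (Fin (n + 1)) := EuclideanSpace.single (Fin.last n) 1
  have he : ‖e‖ = 1 := by simp [e]
  have hsplit := EuclideanSpace.measurePreserving_splitLast n
  refine ⟨((EuclideanSpace.bijOn_splitLast n).comp
    ((bijOn_parabolicStretch he).comp bijOn_smul_sphere)).congr fun p hp =>
      EuclideanSpace.splitLast_parabolicStretch_smul (le_of_lt hp.1) p.2, fun f hf => ?_⟩
  have hf' : Integrable (fun x => f (EuclideanSpace.splitLast n x)) :=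
    (hsplit.integrable_comp_emb (EuclideanSpace.splitLast n).measurableEmbedding).2 hf
  rw [← hsplit.integral_comp', ← integral_abs_det_fderiv_parabolicStretch_smul volume he,
    integral_eq_integral_sphere_integral_Ioi volume
      ((integrable_abs_det_fderiv_parabolicStretch_smul_iff volume he).2 hf')]
  refine integral_congr_ae (.of_forall fun v => ?_)
  dsimp only
  rw [← integral_const_mul]
  refine setIntegral_congr_fun measurableSet_Ioi fun ρ (hρ : 0 < ρ) => ?_
  rw [abs_det_fderiv_parabolicStretch_smul he hρ (norm_eq_of_mem_sphere v),
    EuclideanSpace.splitLast_parabolicStretch_smul hρ.le, EuclideanSpace.inner_single_left,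
    finrank_euclideanSpace_fin]
  simp
  ring
end

section
/- Mollified BMO bound, Case ν ≥ r: Let Σ be parabolic ADR with surface measure σ, and let Λ_ν(x,z) = b(x,ν)^{-1} ζ((x-z)/ν^α) be a normalized mollifier on Σ with supp ζ ⊂ B(0,1), ζ ≡ 1 on B(0,1/2), 0 ≤ ζ ≤ 1, and b(x,ν) = ∬_Σ ζ((x-z)/ν^α) dσ(z) ≈ ν^{n+1}. Define f_ν(x) := ∬_Σ Λ_ν(x,z) f(z) dσ(z). Then for any surface cube Δ = Δ(y,r) with ν ≥ r, ⨍_Δ |f_ν - c| dσ ≲ ||f||_{BMO(Σ)}, where c = ⨍_{Δ(x,2ν)} f dσ, with implicit constant depending only on n and the ADR constant. -/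
/-!
For `x ∈ Δ(y,r)` the kernel `z ↦ ζ((x-z)/ν^α)` is supported in `Q(x,ν) ⊆ Q(y,2ν)` and equals `1`
on `Q(x,ρ₀)`, `ρ₀ = ν/(2(n+1))`, so by the lower ADR bound its mass `b(x,ν)` is `≳ ν^{n+1}`.
Since `0 ≤ ζ ≤ 1`, `b(x,ν) |f_ν(x) - c| = |∫_{Δ(y,2ν)} ζ((x-z)/ν^α) (f(z) - c) dσ(z)|` is at most
`∫_{Δ(y,2ν)} |f - c| dσ ≤ σ(Δ(y,2ν)) ‖f‖_{BMO}`, and the upper ADR bound makes `|f_ν(x) - c|`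
pointwise `≲ ‖f‖_{BMO}`, which is then averaged over `Δ`.

`Σ` is not assumed measurable, so the pointwise bound is proved on the open set of `x` where
`σ(Q(x,ρ₀) ∩ Σ)` is large, which contains `Δ`; it is open because `x ↦ σ(Q(x,ρ₀) ∩ Σ)` is lower
semicontinuous.
-/

open MeasureTheory Set
open scoped ENNReal

/-- The parabolic distance `|X - Y| + |t - s|^{1/2}`. -/
noncomputable def pdist {n : ℕ} (p q : EuclideanSpace ℝ (Fin n) × ℝ) : ℝ :=
  ‖p.1 - q.1‖ + Real.sqrt |p.2 - q.2|

/-- The diameter of a set with respect to the parabolic distance. -/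
noncomputable def pdiam {n : ℕ} (S : Set (EuclideanSpace ℝ (Fin n) × ℝ)) : ℝ≥0∞ :=
  ⨆ (p) (_ : p ∈ S) (q) (_ : q ∈ S), ENNReal.ofReal (pdist p q)

/-- Parabolic scaling `p/ν^α`: spatial components divided by `ν`, time by `ν²`. -/
noncomputable def pscale {n : ℕ} (ν : ℝ) (p : EuclideanSpace ℝ (Fin n) × ℝ) :
    EuclideanSpace ℝ (Fin n) × ℝ :=
  (ν⁻¹ • p.1, p.2 / ν ^ 2)

open Filter Topology

theorem div_two_mul_natCast_add_one_le_half {ν : ℝ} (hν : 0 ≤ ν) (n : ℕ) :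
    ν / (2 * (n + 1)) ≤ ν / 2 :=
  div_le_div_of_nonneg_left hν two_pos (by linarith [n.cast_nonneg (α := ℝ)])

theorem mul_abs_inv_mul_sub_le {m b I c : ℝ} (hm : 0 ≤ m) (hmb : m ≤ b) :
    m * |b⁻¹ * I - c| ≤ |I - c * b| := by
  rcases hm.eq_or_lt with rfl | hm
  · simp
  have hb : 0 < b := hm.trans_le hmb
  calc m * |b⁻¹ * I - c| ≤ b * |b⁻¹ * I - c| := by gcongr
    _ = |b * (b⁻¹ * I - c)| := by rw [abs_mul, abs_of_pos hb]
    _ = |I - c * b| := by rw [mul_sub, mul_inv_cancel_left₀ hb.ne', mul_comm]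

section

variable {α : Type*} [MeasurableSpace α] {μ : Measure α}

theorem average_le_of_ae_le {g : α → ℝ} {K : ℝ} (hK : 0 ≤ K) (h : ∀ᵐ x ∂μ, g x ≤ K) :
    ⨍ x, g x ∂μ ≤ K := by
  rw [average_eq']
  set μ' := (μ univ)⁻¹ • μ
  have hμ' : μ'.real univ ≤ 1 := ENNReal.toReal_le_of_le_ofReal zero_le_one <| by
    rw [ENNReal.ofReal_one, Measure.smul_apply, smul_eq_mul, ← ENNReal.div_eq_inv_mul]
    exact ENNReal.div_self_le_one
  by_cases hg : Integrable g μ'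
  · calc ∫ x, g x ∂μ' ≤ ∫ _, K ∂μ' :=
          integral_mono_ae hg (integrable_const K) (Measure.ae_smul_measure h _)
      _ = μ'.real univ * K := by rw [integral_const, smul_eq_mul]
      _ ≤ K := mul_le_of_le_one_left hK hμ'
  · rw [integral_undef hg]
    exact hK

theorem setAverage_le_of_subset_of_forall_le {s t : Set α} (ht : MeasurableSet t) (hst : s ⊆ t)
    {g : α → ℝ} {K : ℝ} (hK : 0 ≤ K) (h : ∀ x ∈ t, g x ≤ K) : ⨍ x in s, g x ∂μ ≤ K :=
  average_le_of_ae_le hK (ae_restrict_of_ae_restrict_of_subset hst ((ae_restrict_mem ht).mono h))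

theorem abs_integral_mul_sub_mul_integral_le [IsFiniteMeasure μ] {φ f : α → ℝ}
    (hφm : AEStronglyMeasurable φ μ) (hφ : ∀ x, ‖φ x‖ ≤ 1) (hf : Integrable f μ) (c : ℝ) :
    |∫ x, φ x * f x ∂μ - c * ∫ x, φ x ∂μ| ≤ ∫ x, |f x - c| ∂μ := by
  have hφi : Integrable φ μ := .of_bound hφm 1 (.of_forall hφ)
  have hfc : Integrable (fun x => f x - c) μ := hf.sub (integrable_const c)
  have hφfc : Integrable (fun x => φ x * (f x - c)) μ := hfc.bdd_mul hφm (.of_forall hφ)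
  calc |∫ x, φ x * f x ∂μ - c * ∫ x, φ x ∂μ| = |∫ x, φ x * (f x - c) ∂μ| := by
        rw [← integral_const_mul, ← integral_sub (hf.bdd_mul hφm (.of_forall hφ))
          (hφi.const_mul c)]
        simp only [mul_sub, mul_comm c]
    _ ≤ ∫ x, |φ x * (f x - c)| ∂μ := abs_integral_le_integral_abs
    _ ≤ ∫ x, |f x - c| ∂μ := integral_mono hφfc.abs hfc.abs fun x => by
        rw [abs_mul]
        exact mul_le_of_le_one_left (abs_nonneg _) (hφ x)

theorem setIntegral_eq_setIntegral_inter_of_forall_notMem {E : Type*} [NormedAddCommGroup E]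
    [NormedSpace ℝ E] {S U : Set α} (hU : MeasurableSet U) {F : α → E}
    (hF : ∀ z ∉ U, F z = 0) : ∫ z in S, F z ∂μ = ∫ z in U ∩ S, F z ∂μ := by
  rw [← setIntegral_eq_integral_of_forall_compl_eq_zero hF, Measure.restrict_restrict hU]

end

section

variable {n : ℕ}

theorem isOpen_setOf_mem_pQ :
    IsOpen {p : (EuclideanSpace ℝ (Fin n) × ℝ) × (EuclideanSpace ℝ (Fin n) × ℝ) × ℝ |
      p.2.1 ∈ pQ p.1 p.2.2} := by
  simp only [pQ, mem_ofPred_eq]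
  simp only [ofPred_and, ofPred_forall]
  exact (isOpen_iInter_of_finite fun i => isOpen_lt (by fun_prop) (by fun_prop)).inter
    (isOpen_lt (by fun_prop) (by fun_prop))

theorem isOpen_pQ (x : EuclideanSpace ℝ (Fin n) × ℝ) (r : ℝ) : IsOpen (pQ x r) :=
  isOpen_setOf_mem_pQ.preimage (f := fun q => (x, q, r)) (by fun_prop)

theorem isOpen_setOf_radius_mem_pQ (x q : EuclideanSpace ℝ (Fin n) × ℝ) :
    IsOpen {r : ℝ | q ∈ pQ x r} :=
  isOpen_setOf_mem_pQ.preimage (f := fun r => (x, q, r)) (by fun_prop)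

theorem mem_pQ_comm {x q : EuclideanSpace ℝ (Fin n) × ℝ} {r : ℝ} : q ∈ pQ x r ↔ x ∈ pQ q r := by
  simp only [pQ, mem_ofPred_eq, abs_sub_comm]

theorem center_mem_pQ (x : EuclideanSpace ℝ (Fin n) × ℝ) {r : ℝ} (hr : 0 < r) : x ∈ pQ x r :=
  ⟨fun i => by simpa using hr, by simpa using pow_pos hr 2⟩

theorem pQ_subset_pQ (x : EuclideanSpace ℝ (Fin n) × ℝ) {a b : ℝ} (ha : 0 ≤ a) (hab : a ≤ b) :
    pQ x a ⊆ pQ x b := fun _ hq =>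
  ⟨fun i => (hq.1 i).trans_le hab, hq.2.trans_le (pow_le_pow_left₀ ha hab 2)⟩

theorem pQ_subset_pQ_add {x y : EuclideanSpace ℝ (Fin n) × ℝ} {r s : ℝ} (hr : 0 ≤ r) (hs : 0 ≤ s)
    (hx : x ∈ pQ y r) : pQ x s ⊆ pQ y (r + s) := by
  rintro q ⟨hq₁, hq₂⟩
  refine ⟨fun i => ?_, ?_⟩
  · linarith [abs_sub_le (y.1 i) (x.1 i) (q.1 i), hx.1 i, hq₁ i]
  · nlinarith [abs_sub_le y.2 x.2 q.2, hx.2]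

theorem pQ_subset_pQ_two_mul {x y : EuclideanSpace ℝ (Fin n) × ℝ} {ν s : ℝ} (hν : 0 ≤ ν)
    (hs : 0 ≤ s) (hsν : s ≤ ν) (hx : x ∈ pQ y ν) : pQ x s ⊆ pQ y (2 * ν) :=
  (pQ_subset_pQ x hs hsν).trans (by simpa [two_mul] using pQ_subset_pQ_add hν hν hx)

theorem isOpen_setOf_lt_measure_pQ (τ : Measure (EuclideanSpace ℝ (Fin n) × ℝ)) {ρ : ℝ}
    (hρ : 0 < ρ) (c : ℝ≥0∞) : IsOpen {x | c < τ (pQ x ρ)} := by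
  -- `Q(x, s k)` increases to `Q(x, ρ)`, and `Q(x, s k) ⊆ Q(x', ρ)` whenever `x' ∈ Q(x, ρ - s k)`.
  rw [isOpen_iff_mem_nhds]
  intro x hx
  set s : ℕ → ℝ := fun k => ρ * (1 - 1 / ((k : ℝ) + 1))
  have hs_nonneg (k : ℕ) : 0 ≤ s k :=
    mul_nonneg hρ.le (sub_nonneg.2 (div_le_one_of_le₀ (by linarith [k.cast_nonneg (α := ℝ)])
      (by positivity)))
  have hs_lt (k : ℕ) : s k < ρ := by
    have : 0 < 1 / ((k : ℝ) + 1) := by positivity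
    nlinarith
  have hs_mono : Monotone s := fun k l hkl =>
    mul_le_mul_of_nonneg_left (sub_le_sub_left (Nat.one_div_le_one_div hkl) 1) hρ.le
  have hs_tendsto : Tendsto s atTop (𝓝 ρ) := by
    simpa [s] using (tendsto_one_div_add_atTop_nhds_zero_nat.const_sub 1).const_mul ρ
  have hunion : ⋃ k, pQ x (s k) = pQ x ρ :=
    (iUnion_subset fun k => pQ_subset_pQ x (hs_nonneg k) (hs_lt k).le).antisymm fun q hq =>
      mem_iUnion.2 (hs_tendsto.eventually ((isOpen_setOf_radius_mem_pQ x q).mem_nhds hq)).exists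
  obtain ⟨k, hk⟩ : ∃ k, c < τ (pQ x (s k)) :=
    ((tendsto_measure_iUnion_atTop fun k l hkl => pQ_subset_pQ x (hs_nonneg k) (hs_mono hkl)
      ).eventually_const_lt (hunion ▸ hx)).exists
  filter_upwards [(isOpen_pQ x (ρ - s k)).mem_nhds (center_mem_pQ x (sub_pos.2 (hs_lt k)))]
    with x' hx'
  refine hk.trans_le (measure_mono ?_)
  simpa using pQ_subset_pQ_add (sub_pos.2 (hs_lt k)).le (hs_nonneg k) (mem_pQ_comm.1 hx')

theorem EuclideanSpace.norm_le_of_forall_abs_le {v : EuclideanSpace ℝ (Fin n)} {ρ : ℝ}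
    (hρ : 0 ≤ ρ) (h : ∀ i, |v i| ≤ ρ) : ‖v‖ ≤ (n + 1) * ρ := by
  rw [EuclideanSpace.norm_eq, Real.sqrt_le_left (by positivity)]
  calc ∑ i, ‖v i‖ ^ 2 ≤ ∑ _i : Fin n, ρ ^ 2 :=
        Finset.sum_le_sum fun i _ => pow_le_pow_left₀ (norm_nonneg _) (h i) 2
    _ = n * ρ ^ 2 := by simp
    _ ≤ ((n + 1) * ρ) ^ 2 := by nlinarith [n.cast_nonneg (α := ℝ), sq_nonneg ρ]

@[fun_prop]
theorem continuous_pscale (ν : ℝ) : Continuous (pscale (n := n) ν) := by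
  unfold pscale; fun_prop

theorem norm_pscale_fst (ν : ℝ) (p : EuclideanSpace ℝ (Fin n) × ℝ) :
    ‖(pscale ν p).1‖ = ‖p.1‖ / |ν| := by
  simp [pscale, norm_smul, div_eq_inv_mul]

theorem abs_pscale_snd (ν : ℝ) (p : EuclideanSpace ℝ (Fin n) × ℝ) :
    |(pscale ν p).2| = |p.2| / ν ^ 2 := by
  simp [pscale, abs_div]

theorem mem_pQ_of_pscale_sub {x w : EuclideanSpace ℝ (Fin n) × ℝ} {ν : ℝ} (hν : 0 < ν)
    (h₁ : ‖(pscale ν (x - w)).1‖ < 1) (h₂ : |(pscale ν (x - w)).2| < 1) : w ∈ pQ x ν := by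
  rw [norm_pscale_fst, abs_of_pos hν, div_lt_one hν] at h₁
  rw [abs_pscale_snd, div_lt_one (by positivity)] at h₂
  refine ⟨fun i => ?_, h₂⟩
  calc |x.1 i - w.1 i| = ‖(x - w).1 i‖ := by simp
    _ ≤ ‖(x - w).1‖ := PiLp.norm_apply_le _ i
    _ < ν := h₁

theorem pscale_sub_le_half_of_mem_pQ {x w : EuclideanSpace ℝ (Fin n) × ℝ} {ν : ℝ} (hν : 0 < ν)
    (hw : w ∈ pQ x (ν / (2 * (n + 1)))) :
    ‖(pscale ν (x - w)).1‖ ≤ 1 / 2 ∧ |(pscale ν (x - w)).2| ≤ 1 / 2 := by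
  have hρ : 0 ≤ ν / (2 * (n + 1)) := by positivity
  have hρν := div_two_mul_natCast_add_one_le_half hν.le n
  constructor
  · have hcoord (i) : |(x - w).1 i| ≤ ν / (2 * (n + 1)) := by simpa using (hw.1 i).le
    rw [norm_pscale_fst, abs_of_pos hν, div_le_iff₀ hν]
    calc ‖(x - w).1‖ ≤ (n + 1) * (ν / (2 * (n + 1))) :=
          EuclideanSpace.norm_le_of_forall_abs_le hρ hcoord
      _ = 1 / 2 * ν := by field_simp
  · rw [abs_pscale_snd, div_le_iff₀ (by positivity)]
    have h₂ : |(x - w).2| < (ν / (2 * (n + 1))) ^ 2 := hw.2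
    nlinarith [pow_le_pow_left₀ hρ hρν 2]

noncomputable def mollify (σ : Measure (EuclideanSpace ℝ (Fin n) × ℝ))
    (S : Set (EuclideanSpace ℝ (Fin n) × ℝ)) (ζ : EuclideanSpace ℝ (Fin n) × ℝ → ℝ) (ν : ℝ)
    (f : EuclideanSpace ℝ (Fin n) × ℝ → ℝ) (x : EuclideanSpace ℝ (Fin n) × ℝ) : ℝ :=
  ∫ z in S, (∫ w in S, ζ (pscale ν (x - w)) ∂σ)⁻¹ * ζ (pscale ν (x - z)) * f z ∂σ

variable {S : Set (EuclideanSpace ℝ (Fin n) × ℝ)} {σ : Measure (EuclideanSpace ℝ (Fin n) × ℝ)}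
  {ζ f : EuclideanSpace ℝ (Fin n) × ℝ → ℝ} {x y : EuclideanSpace ℝ (Fin n) × ℝ} {ν : ℝ}

theorem bump_pscale_sub_eq_zero
    (hζsupp : ∀ p : EuclideanSpace ℝ (Fin n) × ℝ, ζ p ≠ 0 → ‖p.1‖ < 1 ∧ |p.2| < 1)
    (hν : 0 < ν) (hx : x ∈ pQ y ν) {w : EuclideanSpace ℝ (Fin n) × ℝ}
    (hw : w ∉ pQ y (2 * ν)) : ζ (pscale ν (x - w)) = 0 :=
  by_contra fun h => hw <| pQ_subset_pQ_two_mul hν.le hν.le le_rfl hx <|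
    mem_pQ_of_pscale_sub hν (hζsupp _ h).1 (hζsupp _ h).2

theorem bump_pscale_sub_eq_one
    (hζone : ∀ p : EuclideanSpace ℝ (Fin n) × ℝ, ‖p.1‖ ≤ 1 / 2 → |p.2| ≤ 1 / 2 → ζ p = 1)
    (hν : 0 < ν) {w : EuclideanSpace ℝ (Fin n) × ℝ} (hw : w ∈ pQ x (ν / (2 * (n + 1)))) :
    ζ (pscale ν (x - w)) = 1 :=
  hζone _ (pscale_sub_le_half_of_mem_pQ hν hw).1 (pscale_sub_le_half_of_mem_pQ hν hw).2

theorem mollify_eq_inv_mul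
    (hζsupp : ∀ p : EuclideanSpace ℝ (Fin n) × ℝ, ζ p ≠ 0 → ‖p.1‖ < 1 ∧ |p.2| < 1)
    (hν : 0 < ν) (hx : x ∈ pQ y ν) :
    mollify σ S ζ ν f x = (∫ w in pQ y (2 * ν) ∩ S, ζ (pscale ν (x - w)) ∂σ)⁻¹ *
      ∫ z in pQ y (2 * ν) ∩ S, ζ (pscale ν (x - z)) * f z ∂σ := by
  have hU := (isOpen_pQ y (2 * ν)).measurableSet
  have h₀ (w) (hw : w ∉ pQ y (2 * ν)) := bump_pscale_sub_eq_zero hζsupp hν hx hw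
  rw [mollify, setIntegral_eq_setIntegral_inter_of_forall_notMem hU h₀,
    setIntegral_eq_setIntegral_inter_of_forall_notMem hU fun z hz => by simp [h₀ z hz]]
  simp_rw [mul_assoc]
  exact integral_const_mul _ _

theorem measureReal_le_integral_bump_pscale_sub (hζc : Continuous ζ)
    (hζ01 : ∀ p, 0 ≤ ζ p ∧ ζ p ≤ 1)
    (hζone : ∀ p : EuclideanSpace ℝ (Fin n) × ℝ, ‖p.1‖ ≤ 1 / 2 → |p.2| ≤ 1 / 2 → ζ p = 1)
    (hν : 0 < ν) (hx : x ∈ pQ y ν) (hD : σ (pQ y (2 * ν) ∩ S) ≠ ∞) :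
    σ.real (pQ x (ν / (2 * (n + 1))) ∩ S) ≤
      ∫ w in pQ y (2 * ν) ∩ S, ζ (pscale ν (x - w)) ∂σ := by
  set ρ₀ := ν / (2 * (n + 1))
  have : IsFiniteMeasure (σ.restrict (pQ y (2 * ν) ∩ S)) := isFiniteMeasure_restrict.2 hD
  have hQ := (isOpen_pQ x ρ₀).measurableSet
  have hρ₀ν : ρ₀ ≤ ν := by linarith [div_two_mul_natCast_add_one_le_half hν.le n]
  have hρ₀D : pQ x ρ₀ ∩ (pQ y (2 * ν) ∩ S) = pQ x ρ₀ ∩ S := by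
    rw [← inter_assoc, inter_eq_left.2 (pQ_subset_pQ_two_mul hν.le (by positivity) hρ₀ν hx)]
  calc σ.real (pQ x ρ₀ ∩ S) = ∫ _ in pQ x ρ₀, (1 : ℝ) ∂σ.restrict (pQ y (2 * ν) ∩ S) := by
        rw [setIntegral_const, measureReal_restrict_apply hQ, hρ₀D, smul_eq_mul, mul_one]
    _ = ∫ w in pQ x ρ₀, ζ (pscale ν (x - w)) ∂σ.restrict (pQ y (2 * ν) ∩ S) :=
        setIntegral_congr_fun hQ fun w hw => (bump_pscale_sub_eq_one hζone hν hw).symm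
    _ ≤ _ := setIntegral_le_integral
        (.of_bound (hζc.comp (by fun_prop)).aestronglyMeasurable 1
          (.of_forall fun _ => (Real.norm_of_nonneg (hζ01 _).1).trans_le (hζ01 _).2))
        (.of_forall fun _ => (hζ01 _).1)

theorem measureReal_mul_abs_mollify_sub_le (hζc : Continuous ζ) (hζ01 : ∀ p, 0 ≤ ζ p ∧ ζ p ≤ 1)
    (hζsupp : ∀ p : EuclideanSpace ℝ (Fin n) × ℝ, ζ p ≠ 0 → ‖p.1‖ < 1 ∧ |p.2| < 1)
    (hζone : ∀ p : EuclideanSpace ℝ (Fin n) × ℝ, ‖p.1‖ ≤ 1 / 2 → |p.2| ≤ 1 / 2 → ζ p = 1)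
    (hν : 0 < ν) (hx : x ∈ pQ y ν) (hD : σ (pQ y (2 * ν) ∩ S) ≠ ∞)
    (hf : IntegrableOn f (pQ y (2 * ν) ∩ S) σ) (c : ℝ) :
    σ.real (pQ x (ν / (2 * (n + 1))) ∩ S) * |mollify σ S ζ ν f x - c| ≤
      ∫ z in pQ y (2 * ν) ∩ S, |f z - c| ∂σ := by
  have : IsFiniteMeasure (σ.restrict (pQ y (2 * ν) ∩ S)) := isFiniteMeasure_restrict.2 hD
  rw [mollify_eq_inv_mul hζsupp hν hx]
  exact (mul_abs_inv_mul_sub_le measureReal_nonneg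
    (measureReal_le_integral_bump_pscale_sub hζc hζ01 hζone hν hx hD)).trans
    (abs_integral_mul_sub_mul_integral_le (hζc.comp (by fun_prop)).aestronglyMeasurable
      (fun _ => (Real.norm_of_nonneg (hζ01 _).1).trans_le (hζ01 _).2) hf c)

theorem abs_mollify_sub_setAverage_le {β : ℝ} (hζc : Continuous ζ)
    (hζ01 : ∀ p, 0 ≤ ζ p ∧ ζ p ≤ 1)
    (hζsupp : ∀ p : EuclideanSpace ℝ (Fin n) × ℝ, ζ p ≠ 0 → ‖p.1‖ < 1 ∧ |p.2| < 1)
    (hζone : ∀ p : EuclideanSpace ℝ (Fin n) × ℝ, ‖p.1‖ ≤ 1 / 2 → |p.2| ≤ 1 / 2 → ζ p = 1)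
    (hν : 0 < ν) (hx : x ∈ pQ y ν) (hD : σ (pQ y (2 * ν) ∩ S) ≠ ∞)
    (hf : IntegrableOn f (pQ y (2 * ν) ∩ S) σ) (hβ : 0 < β)
    (hxβ : ENNReal.ofReal β < σ (pQ x (ν / (2 * (n + 1))) ∩ S)) :
    |mollify σ S ζ ν f x - ⨍ z in pQ y (2 * ν) ∩ S, f z ∂σ| ≤
      σ.real (pQ y (2 * ν) ∩ S) *
        (⨍ z in pQ y (2 * ν) ∩ S, |f z - ⨍ w in pQ y (2 * ν) ∩ S, f w ∂σ| ∂σ) / β := by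
  have hρ₀ν : ν / (2 * (n + 1)) ≤ ν := by
    linarith [div_two_mul_natCast_add_one_le_half hν.le n]
  have hxfin : σ (pQ x (ν / (2 * (n + 1))) ∩ S) ≠ ∞ := ne_top_of_le_ne_top hD <|
    measure_mono (inter_subset_inter_left S (pQ_subset_pQ_two_mul hν.le (by positivity) hρ₀ν hx))
  rw [ENNReal.ofReal_lt_iff_lt_toReal hβ.le hxfin] at hxβ
  rw [← smul_eq_mul (a := σ.real _), measure_smul_setAverage _ hD, le_div_iff₀ hβ, mul_comm]
  exact (mul_le_mul_of_nonneg_right hxβ.le (abs_nonneg _)).trans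
    (measureReal_mul_abs_mollify_sub_le hζc hζ01 hζsupp hζone hν hx hD hf _)

theorem subset_setOf_lt_restrict_measure_pQ {M₀ ρ : ℝ} (hM₀ : 0 < M₀) (hρ : 0 < ρ)
    (hlow : ∀ x ∈ S, ENNReal.ofReal (ρ ^ (n + 1) / M₀) ≤ σ (pQ x ρ ∩ S)) :
    S ⊆ {x | ENNReal.ofReal (ρ ^ (n + 1) / (2 * M₀)) < σ.restrict S (pQ x ρ)} := fun x hx => by
  rw [mem_ofPred_eq, Measure.restrict_apply (isOpen_pQ x ρ).measurableSet]
  refine lt_of_lt_of_le ?_ (hlow x hx)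
  rw [ENNReal.ofReal_lt_ofReal_iff (by positivity)]
  exact div_lt_div_of_pos_left (by positivity) hM₀ (by linarith)

end

/-- mollified BMO bound, case `ν ≥ r`.  With `Σ` parabolic ADR,
`Λ_ν(x,z) = b(x,ν)⁻¹ ζ((x-z)/ν^α)` a normalized mollifier, and
`f_ν(x) = ∬_Σ Λ_ν(x,z) f(z) dσ(z)`, one has, for any surface cube `Δ = Δ(y,r)` with
`ν ≥ r`, `⨍_Δ |f_ν - c| dσ ≲ ‖f‖_{BMO(Σ)}` where `c = ⨍_{Δ(y,2ν)} f dσ`, with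
constant depending only on `n` and the ADR constant `M₀`. -/
theorem mollified_bmo_case_nu_ge_r (n : ℕ) (M₀ : ℝ) (hM₀ : 0 < M₀) :
    ∃ C > (0 : ℝ),
      ∀ (S : Set (EuclideanSpace ℝ (Fin n) × ℝ))
        (σ : Measure (EuclideanSpace ℝ (Fin n) × ℝ))
        (ζ : EuclideanSpace ℝ (Fin n) × ℝ → ℝ)
        (f : EuclideanSpace ℝ (Fin n) × ℝ → ℝ) (B : ℝ),
        -- ADR
        (∀ x ∈ S, ∀ ρ : ℝ, 0 < ρ → ENNReal.ofReal ρ < pdiam S →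
          ENNReal.ofReal (ρ ^ (n + 1) / M₀) ≤ σ (pQ x ρ ∩ S) ∧
            σ (pQ x ρ ∩ S) ≤ ENNReal.ofReal (M₀ * ρ ^ (n + 1))) →
        -- properties of the bump function ζ
        Continuous ζ →
        (∀ p, 0 ≤ ζ p ∧ ζ p ≤ 1) →
        (∀ p : EuclideanSpace ℝ (Fin n) × ℝ, ζ p ≠ 0 → ‖p.1‖ < 1 ∧ |p.2| < 1) →
        (∀ p : EuclideanSpace ℝ (Fin n) × ℝ, ‖p.1‖ ≤ 1 / 2 → |p.2| ≤ 1 / 2 → ζ p = 1) →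
        -- f is locally integrable on Σ and has BMO norm at most B
        (∀ x r, IntegrableOn f (pQ x r ∩ S) σ) →
        0 ≤ B →
        (∀ y ∈ S, ∀ ρ : ℝ, 0 < ρ → ENNReal.ofReal ρ < pdiam S →
          ⨍ z in pQ y ρ ∩ S, |f z - ⨍ w in pQ y ρ ∩ S, f w ∂σ| ∂σ ≤ B) →
        -- conclusion: Case ν ≥ r
        ∀ y ∈ S, ∀ ν r : ℝ, 0 < r → r ≤ ν → ENNReal.ofReal (2 * ν) < pdiam S →
          ⨍ x in pQ y r ∩ S,
              |(∫ z in S, (∫ w in S, ζ (pscale ν (x - w)) ∂σ)⁻¹ *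
                  ζ (pscale ν (x - z)) * f z ∂σ) -
                ⨍ z in pQ y (2 * ν) ∩ S, f z ∂σ| ∂σ ≤ C * B := by
  refine ⟨2 ^ (n + 2) * M₀ ^ 2 * (2 * ((n : ℝ) + 1)) ^ (n + 1), by positivity, ?_⟩
  intro S σ ζ f B hADR hζc hζ01 hζsupp hζone hf hB hBMO y hy ν r hr hrν hdiam
  have hν : 0 < ν := hr.trans_le hrν
  set ρ₀ := ν / (2 * ((n : ℝ) + 1))
  have hρ₀ : 0 < ρ₀ := by positivity
  have hρ₀ν : ρ₀ ≤ ν := by linarith [div_two_mul_natCast_add_one_le_half hν.le n]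
  obtain ⟨-, hDup⟩ := hADR y hy (2 * ν) (by positivity) hdiam
  have hD : σ (pQ y (2 * ν) ∩ S) ≠ ∞ := ne_top_of_le_ne_top ENNReal.ofReal_ne_top hDup
  have hSV := subset_setOf_lt_restrict_measure_pQ hM₀ hρ₀ fun x hx =>
    (hADR x hx ρ₀ hρ₀ ((ENNReal.ofReal_le_ofReal (by linarith)).trans_lt hdiam)).1
  refine setAverage_le_of_subset_of_forall_le
    ((isOpen_setOf_lt_measure_pQ _ hρ₀ _).inter (isOpen_pQ y r)).measurableSet
    (fun x hx => ⟨hSV hx.2, hx.1⟩) (by positivity) fun x ⟨hxV, hxQ⟩ => ?_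
  rw [mem_ofPred_eq, Measure.restrict_apply (isOpen_pQ x ρ₀).measurableSet] at hxV
  calc _ ≤ _ := abs_mollify_sub_setAverage_le hζc hζ01 hζsupp hζone hν
        (pQ_subset_pQ y hr.le hrν hxQ) hD (hf y (2 * ν)) (by positivity) hxV
    _ ≤ M₀ * (2 * ν) ^ (n + 1) * B / (ρ₀ ^ (n + 1) / (2 * M₀)) := by
        gcongr ?_ * ?_ / _
        · exact integral_nonneg fun _ => abs_nonneg _
        · exact ENNReal.toReal_le_of_le_ofReal (by positivity) hDup
        · exact hBMO y hy _ (by positivity) hdiam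
    _ = _ := by
        simp only [ρ₀, div_pow, mul_pow]
        field_simp
        ring
end
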